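/- arXiv:0709.4022 — 3 statements merged into one kernel-verified Lean document; each statement's English description precedes it below -/
import Mathlib

section
/- Let H be a non-negative self-adjoint operator on a Hilbert space with eigenvalues 0 ≤ E_1 ≤ E_2 ≤ ... and corresponding orthonormal eigenvectors ψ_1, ψ_2, .... Let f_1, ..., f_k be orthonormal vectors with ⟨f_i, H f_i⟩ ≤ η E_i for some η > 1. If E_{k+1} > E_k, then ∑_{i=1}^k ∑_{j=1}^k |⟨f_i, ψ_j⟩|² ≥ k − (η − 1)(∑_{i=1}^k E_i)/(E_{k+1} − E_k). -/
/-!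
Put `c j = ∑ᵢ |⟨f i, ψ j⟩|²`. Bessel's inequality gives `c j ≤ 1`, Parseval gives `∑ⱼ c j = k`,
and expanding in the eigenbasis turns the trial energies into `∑ⱼ E_j c j ≤ η ∑_{j ≤ k} E_j`.
The weight `k - ∑_{j ≤ k} c j` missing from the lowest `k` levels has to sit at energies
`≥ E_{k+1}`, while the lowest levels, being filled to at most `1`, lose at most `E_k` per unit of
missing weight; so the missing weight costs at least `(E_{k+1} - E_k)` per unit, and the total
extra cost is at most `(η - 1) ∑_{j ≤ k} E_j`.
-/

open scoped BigOperators InnerProductSpace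

theorem gap_mul_card_sub_sum_le {ι : Type*} [Fintype ι] [DecidableEq ι] (s : Finset ι)
    (μ c : ι → ℝ) {e g : ℝ} (hμs : ∀ j ∈ s, μ j ≤ e) (hμsc : ∀ j ∉ s, g ≤ μ j)
    (hcs : ∀ j ∈ s, c j ≤ 1) (hcsc : ∀ j ∉ s, 0 ≤ c j) (hc : ∑ j, c j = s.card) :
    (g - e) * (s.card - ∑ j ∈ s, c j) ≤ ∑ j, μ j * c j - ∑ j ∈ s, μ j := by
  have hdeficit_head : ∑ j ∈ s, (1 - c j) = s.card - ∑ j ∈ s, c j := by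
    simp [Finset.sum_sub_distrib]
  have hdeficit_tail : ∑ j ∈ sᶜ, c j = s.card - ∑ j ∈ s, c j := by
    rw [← hc, ← Finset.sum_add_sum_compl s c]
    ring
  have hhead : ∑ j ∈ s, μ j - e * ∑ j ∈ s, (1 - c j) ≤ ∑ j ∈ s, μ j * c j := by
    rw [Finset.mul_sum, ← Finset.sum_sub_distrib]
    exact Finset.sum_le_sum fun j hj => by nlinarith [hμs j hj, hcs j hj]
  have htail : g * ∑ j ∈ sᶜ, c j ≤ ∑ j ∈ sᶜ, μ j * c j := by
    rw [Finset.mul_sum]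
    refine Finset.sum_le_sum fun j hj => ?_
    rw [Finset.mem_compl] at hj
    exact mul_le_mul_of_nonneg_right (hμsc j hj) (hcsc j hj)
  rw [hdeficit_head] at hhead
  rw [hdeficit_tail] at htail
  rw [← Finset.sum_add_sum_compl s fun j => μ j * c j]
  linarith

section InnerProductSpace

variable {𝕜 E ι κ : Type*} [RCLike 𝕜] [NormedAddCommGroup E] [InnerProductSpace 𝕜 E]
  [Fintype ι] [Fintype κ]

theorem OrthonormalBasis.re_inner_map_self_eq_sum (b : OrthonormalBasis ι 𝕜 E)
    (T : E →ₗ[𝕜] E) (μ : ι → ℝ) (hT : ∀ j, T (b j) = (μ j : 𝕜) • b j) (x : E) :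
    RCLike.re ⟪x, T x⟫_𝕜 = ∑ j, μ j * ‖⟪x, b j⟫_𝕜‖ ^ 2 := by
  have hTx : T x = ∑ j, (⟪b j, x⟫_𝕜 * μ j) • b j := by
    conv_lhs => rw [← b.sum_repr' x]
    simp only [map_sum, map_smul, hT, smul_smul]
  rw [hTx, inner_sum, map_sum]
  refine Finset.sum_congr rfl fun j _ => ?_
  rw [inner_smul_right, ← inner_conj_symm, mul_right_comm, RCLike.conj_mul]
  norm_cast
  ring

theorem OrthonormalBasis.sum_sum_sq_norm_inner_eq_card (b : OrthonormalBasis ι 𝕜 E)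
    {f : κ → E} (hf : Orthonormal 𝕜 f) :
    ∑ j, ∑ i, ‖⟪f i, b j⟫_𝕜‖ ^ 2 = Fintype.card κ := by
  rw [Finset.sum_comm]
  simp [b.sum_sq_norm_inner_left, hf.1]

end InnerProductSpace

theorem Fin.mem_map_castLEEmb_univ {n m : ℕ} (h : n ≤ m) {j : Fin m} :
    j ∈ Finset.univ.map (Fin.castLEEmb h) ↔ (j : ℕ) < n :=
  ⟨fun hj => by obtain ⟨i, -, rfl⟩ := Finset.mem_map.1 hj; exact i.isLt,
    fun hj => Finset.mem_map.2 ⟨⟨j, hj⟩, Finset.mem_univ _, rfl⟩⟩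

/-- Lemma 2 of Seiringer–Yin: if `f 1, …, f k` are orthonormal trial vectors with
`⟨f i, H f i⟩ ≤ η E_i` for some `η > 1`, and `E_{k+1} > E_k`, then
`∑_{i,j=1}^k |⟨f i, ψ j⟩|² ≥ k - (η-1)(∑_{i=1}^k E_i)/(E_{k+1} - E_k)`. -/
theorem lemma2_eigenfunction_overlap {N : ℕ}
    (H : EuclideanSpace ℂ (Fin N) →ₗ[ℂ] EuclideanSpace ℂ (Fin N))
    (μ : Fin N → ℝ) (hμmono : Monotone μ)
    (ψ : Fin N → EuclideanSpace ℂ (Fin N)) (hortho : Orthonormal ℂ ψ)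
    (heig : ∀ i, H (ψ i) = (μ i : ℂ) • ψ i)
    (k : ℕ) (hkN : k < N)
    (f : Fin k → EuclideanSpace ℂ (Fin N)) (hf : Orthonormal ℂ f)
    (η : ℝ)
    (hfH : ∀ i : Fin k,
      (inner ℂ (f i) (H (f i)) : ℂ).re ≤ η * μ (Fin.castLE hkN.le i))
    (hgap : μ ⟨k - 1, by omega⟩ < μ ⟨k, hkN⟩) :
    (k : ℝ) - (η - 1) * (∑ i : Fin k, μ (Fin.castLE hkN.le i)) /
        (μ ⟨k, hkN⟩ - μ ⟨k - 1, by omega⟩) ≤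
      ∑ i : Fin k, ∑ j : Fin k,
        ‖(inner ℂ (f i) (ψ (Fin.castLE hkN.le j)) : ℂ)‖ ^ 2 := by
  let b : OrthonormalBasis (Fin N) ℂ (EuclideanSpace ℂ (Fin N)) :=
    .mk hortho (hortho.linearIndependent.span_eq_top_of_card_eq_finrank' (by simp)).ge
  have hb : ⇑b = ψ := OrthonormalBasis.coe_mk _ _
  let c j := ∑ i, ‖⟪f i, ψ j⟫_ℂ‖ ^ 2
  have hc_le : ∀ j, c j ≤ 1 := fun j => by
    simpa [hortho.1 j] using hf.sum_inner_products_le (ψ j) (s := Finset.univ)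
  have hc_sum : ∑ j, c j = k := by
    simpa [hb] using b.sum_sum_sq_norm_inner_eq_card hf
  have hc_energy : ∑ j, μ j * c j ≤ η * ∑ i : Fin k, μ (Fin.castLE hkN.le i) := by
    simp only [c, Finset.mul_sum, ← hb]
    rw [Finset.sum_comm]
    refine Finset.sum_le_sum fun i _ => ?_
    rw [← b.re_inner_map_self_eq_sum H μ (hb ▸ heig)]
    exact hfH i
  have key := gap_mul_card_sub_sum_le (Finset.univ.map (Fin.castLEEmb hkN.le)) μ c
    (e := μ ⟨k - 1, by omega⟩) (g := μ ⟨k, hkN⟩)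
    (fun j hj => hμmono <| Fin.le_def.2 <| by
      have := (Fin.mem_map_castLEEmb_univ hkN.le).1 hj
      change (j : ℕ) ≤ k - 1
      omega)
    (fun j hj => hμmono <| Fin.le_def.2 <| not_lt.1 <| mt (Fin.mem_map_castLEEmb_univ _).2 hj)
    (fun j _ => hc_le j) (fun j _ => Finset.sum_nonneg fun i _ => by positivity)
    (by simpa using hc_sum)
  simp only [Finset.card_map, Finset.card_univ, Fintype.card_fin, Finset.sum_map,
    Fin.castLEEmb_apply] at key
  rw [sub_le_comm, le_div_iff₀ (sub_pos.2 hgap), Finset.sum_comm]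
  linarith
end

section
/- Let φ ∈ H¹(ℝ), R > 0, κ > 0, and let d : ℝ → [0,∞) be supported in [−R, R] with g' = ∫_ℝ d(z) dz. Then for any fixed z' ∈ ℝ: ∫_ℝ d(z − z') |φ(z)|² dz ≥ g' · (max_{z: |z−z'| ≤ R} |φ(z)|²) · (1 − √(2 g' R/κ)) − κ ∫_ℝ |φ'(z)|² dz. -/
/-!
Let `M = ‖φ z₀‖²` be the maximum of `|φ|²` on `I = [z' - R, z' + R]`. By the fundamental theorem
of calculus `|φ|² ≥ M - 2 √M ∫_I |φ'|` on `I`, so integrating against `d (· - z')`, which lives on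
`I`, gives `∫ d (z - z') |φ z|² ≥ g' M - 2 g' √M ∫_I |φ'|`. Pointwise AM-GM,
`2 g' √M |φ'| ≤ g'² M / κ + κ |φ'|²`, bounds the error term by `g' M x + κ ∫ |φ'|²` with
`x = 2 g' R / κ`. Finally `x ≤ √x` when `x ≤ 1`, while for `x > 1` the left-hand side of the claim
is nonpositive.
-/

open MeasureTheory Set

lemma norm_sub_le_setIntegral_norm_deriv {E : Type*} [NormedAddCommGroup E] [NormedSpace ℝ E]
    [CompleteSpace E] {f f' : ℝ → E} {l u a b : ℝ}
    (hf : ∀ t ∈ Icc l u, HasDerivAt f (f' t) t) (hf' : IntegrableOn f' (Icc l u))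
    (ha : a ∈ Icc l u) (hb : b ∈ Icc l u) :
    ‖f b - f a‖ ≤ ∫ t in Icc l u, ‖f' t‖ := by
  have hsub : uIcc a b ⊆ Icc l u := uIcc_subset_Icc ha hb
  rw [← intervalIntegral.integral_eq_sub_of_hasDerivAt (fun t ht => hf t (hsub ht))
    ((hf'.mono_set hsub).intervalIntegrable)]
  calc ‖∫ t in a..b, f' t‖ ≤ ∫ t in uIoc a b, ‖f' t‖ :=
        intervalIntegral.norm_integral_le_integral_norm_uIoc
    _ ≤ ∫ t in Icc l u, ‖f' t‖ :=
        setIntegral_mono_set hf'.norm (.of_forall fun _ => norm_nonneg _)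
          (.of_forall (Ioc_subset_Icc_self.trans hsub))

lemma two_mul_mul_setIntegral_le {α : Type*} [MeasurableSpace α] {μ : Measure α} {s : Set α}
    (hs : μ s ≠ ⊤) {h : α → ℝ} (hh : IntegrableOn h s μ)
    (hh2 : IntegrableOn (fun t => h t ^ 2) s μ) (c : ℝ) {κ : ℝ} (hκ : 0 < κ) :
    2 * c * ∫ t in s, h t ∂μ ≤ c ^ 2 * μ.real s / κ + κ * ∫ t in s, h t ^ 2 ∂μ := by
  have hpt : ∀ t, 2 * c * h t ≤ c ^ 2 / κ + κ * h t ^ 2 := fun t => by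
    have : 0 ≤ (c - κ * h t) ^ 2 / κ := by positivity
    rw [div_add' _ _ _ hκ.ne', le_div_iff₀ hκ]
    nlinarith
  have hconst : IntegrableOn (fun _ => c ^ 2 / κ) s μ := integrableOn_const hs
  calc 2 * c * ∫ t in s, h t ∂μ = ∫ t in s, 2 * c * h t ∂μ := (integral_const_mul _ _).symm
    _ ≤ ∫ t in s, (c ^ 2 / κ + κ * h t ^ 2) ∂μ :=
        integral_mono (hh.const_mul _) (hconst.add (hh2.const_mul κ)).integrable hpt
    _ = c ^ 2 * μ.real s / κ + κ * ∫ t in s, h t ^ 2 ∂μ := by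
        rw [integral_add hconst (hh2.const_mul κ), integral_const_mul, setIntegral_const,
          smul_eq_mul]
        ring

lemma mul_le_integral_mul_comp_sub {d f : ℝ → ℝ} {R c z' : ℝ} (hd0 : ∀ z, 0 ≤ d z)
    (hdsupp : ∀ z, R < |z| → d z = 0) (hdint : Integrable d)
    (hint : Integrable fun z => d (z - z') * f z) (hc : ∀ z ∈ Icc (z' - R) (z' + R), c ≤ f z) :
    (∫ z, d z) * c ≤ ∫ z, d (z - z') * f z := by
  have hpt : ∀ z, d (z - z') * c ≤ d (z - z') * f z := fun z => by
    by_cases hz : |z - z'| ≤ R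
    · obtain ⟨h1, h2⟩ := abs_le.1 hz
      exact mul_le_mul_of_nonneg_left (hc z ⟨by linarith, by linarith⟩) (hd0 _)
    · simp [hdsupp _ (not_le.1 hz)]
  calc (∫ z, d z) * c = ∫ z, d (z - z') * c := by
        rw [integral_mul_const, integral_sub_right_eq_self]
    _ ≤ ∫ z, d (z - z') * f z := integral_mono ((hdint.comp_sub_right z').mul_const c) hint hpt

lemma integrableOn_Icc_of_integrable_sq_norm {E : Type*} [NormedAddCommGroup E] {f : ℝ → E}
    (hf : AEStronglyMeasurable f) (hf2 : Integrable fun t => ‖f t‖ ^ 2) (l u : ℝ) :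
    IntegrableOn f (Icc l u) :=
  (((memLp_two_iff_integrable_sq_norm hf).2 hf2).restrict _).integrable one_le_two

lemma sq_norm_sub_two_mul_setIntegral_le_of_isMaxOn {E : Type*} [NormedAddCommGroup E]
    [NormedSpace ℝ E] [CompleteSpace E] {f f' : ℝ → E} {l u x₀ z : ℝ}
    (hf : ∀ t ∈ Icc l u, HasDerivAt f (f' t) t) (hf' : IntegrableOn f' (Icc l u))
    (hx₀ : x₀ ∈ Icc l u) (hmax : IsMaxOn (‖f ·‖) (Icc l u) x₀) (hz : z ∈ Icc l u) :
    ‖f x₀‖ ^ 2 - 2 * ‖f x₀‖ * ∫ t in Icc l u, ‖f' t‖ ≤ ‖f z‖ ^ 2 := by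
  have hdiff := (norm_sub_norm_le (f x₀) (f z)).trans
    (norm_sub_le_setIntegral_norm_deriv hf hf' hz hx₀)
  have hzx₀ : ‖f z‖ ≤ ‖f x₀‖ := hmax hz
  nlinarith [norm_nonneg (f z)]

lemma mul_one_sub_sqrt_sub_le {A B P x : ℝ} (hA : 0 ≤ A) (hB : 0 ≤ B) (hP : 0 ≤ P)
    (h : A * (1 - x) - B ≤ P) : A * (1 - √x) - B ≤ P := by
  rcases le_total x 1 with hx | hx
  · have hsqrt : x ≤ √x := by
      rcases le_total x 0 with hx0 | hx0
      · linarith [Real.sqrt_nonneg x]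
      · nlinarith [Real.sq_sqrt hx0, Real.sqrt_le_one.mpr hx, Real.sqrt_nonneg x]
    nlinarith
  · nlinarith [Real.one_le_sqrt.2 hx]

/-- For `φ ∈ H¹(ℝ)`, `d ≥ 0` supported in `[-R, R]` with `g' = ∫ d`, and `κ > 0`:
`∫ d(z-z')|φ(z)|² dz ≥ g' (max_{|z-z'|≤R} |φ(z)|²)(1 - √(2g'R/κ)) - κ ∫ |φ'|²`. -/
theorem delta_function_lower_bound (φ φ' : ℝ → ℂ)
    (hderiv : ∀ t, HasDerivAt φ (φ' t) t)
    (hφ'int : Integrable (fun t => ‖φ' t‖ ^ 2))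
    (R κ : ℝ) (hR : 0 < R) (hκ : 0 < κ)
    (d : ℝ → ℝ) (hd0 : ∀ z, 0 ≤ d z) (hdsupp : ∀ z, R < |z| → d z = 0)
    (hdint : Integrable d) (g' : ℝ) (hg' : g' = ∫ z, d z) (z' : ℝ)
    (hint : Integrable (fun z => d (z - z') * ‖φ z‖ ^ 2)) :
    g' * (⨆ z : Set.Icc (z' - R) (z' + R), ‖φ (z : ℝ)‖ ^ 2) *
        (1 - Real.sqrt (2 * g' * R / κ))
      - κ * ∫ z, ‖φ' z‖ ^ 2
    ≤ ∫ z, d (z - z') * ‖φ z‖ ^ 2 := by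
  set I := Icc (z' - R) (z' + R)
  have hcont : Continuous φ := continuous_iff_continuousAt.2 fun t => (hderiv t).continuousAt
  obtain ⟨zs, hzs, hmax⟩ := (isCompact_Icc : IsCompact I).exists_isMaxOn
    (nonempty_Icc.2 (by linarith)) hcont.norm.continuousOn
  have hmax_sq : IsMaxOn (fun z => ‖φ z‖ ^ 2) I zs := fun y hy =>
    pow_le_pow_left₀ (norm_nonneg _) (hmax hy) 2
  rw [hmax_sq.iSup_eq hzs]
  have hφ'I : IntegrableOn φ' I := by
    refine integrableOn_Icc_of_integrable_sq_norm ?_ hφ'int _ _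
    rw [show φ' = deriv φ from funext fun t => (hderiv t).deriv.symm]
    exact (measurable_deriv φ).aestronglyMeasurable
  have hconv := mul_le_integral_mul_comp_sub hd0 hdsupp hdint hint
    fun z => sq_norm_sub_two_mul_setIntegral_le_of_isMaxOn (fun t _ => hderiv t) hφ'I hzs hmax
  have hamgm := two_mul_mul_setIntegral_le (s := I) measure_Icc_lt_top.ne hφ'I.norm
    hφ'int.integrableOn (g' * ‖φ zs‖) hκ
  rw [Real.volume_real_Icc_of_le (by linarith)] at hamgm
  have hE : κ * ∫ t in I, ‖φ' t‖ ^ 2 ≤ κ * ∫ t, ‖φ' t‖ ^ 2 :=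
    mul_le_mul_of_nonneg_left
      (setIntegral_le_integral hφ'int (.of_forall fun _ => by positivity)) hκ.le
  have hg'0 : 0 ≤ g' := hg' ▸ integral_nonneg hd0
  refine mul_one_sub_sqrt_sub_le (by positivity) (by positivity)
    (integral_nonneg fun z => mul_nonneg (hd0 _) (by positivity)) ?_
  rw [← hg'] at hconv
  have hexpand : g' * ‖φ zs‖ ^ 2 * (1 - 2 * g' * R / κ)
      = g' * ‖φ zs‖ ^ 2 - (g' * ‖φ zs‖) ^ 2 * (z' + R - (z' - R)) / κ := by
    field_simp; ring
  linarith
end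

section
/- Let b : ℝ² → [0,∞) be such that b² is Lipschitz with ‖∇b²‖_∞ < ∞, and let R, r, δ > 0. Define 𝓑_δ = {x ∈ ℝ² : b(x)² ≥ δ} and let U : [0,∞) → [0,∞) satisfy ∫_{ℝ³} U(|x|) d³x = 4π and supp U ⊆ [0, R]. Then ∫_ℝ dz ∫_{ℝ²×ℝ²} b_r(x)² b_r(y)² U(√(|x−y|²+z²)) 𝟙_{𝓑_δ}(y/r) dx dy ≥ (4π/r²)(‖b‖₄⁴ − δ − R ‖∇b²‖_∞ / r), where b_r(x) = r^{-1}b(x/r). -/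
open MeasureTheory Module
open scoped Real ENNReal

/-!
On the support of `U` we have `|x - y| ≤ R`, so the Lipschitz bound gives
`|b(x/r)² - b(y/r)²| ≤ RL/r`. Replacing `b(x/r)²` by `b(y/r)² ∓ RL/r` squeezes the integrand
between two integrands of the form `r⁻⁴ ψ(y/r) U(√(|x-y|² + z²))`. For these the integrals
decouple: translation invariance in `x` and slicing `ℝ³ = ℝ² × ℝ` turn the `x`- and
`z`-integrals into `∫_{ℝ³} U(|w|) dw = 4π`, and the `y`-integral scales to `r² ∫ ψ`. The lower
`ψ` has integral at least `‖b‖₄⁴ - δ - RL/r`; the upper one is integrable, which is what makes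
the iterated Bochner integral agree with the Lebesgue one.
-/

theorem integral_integral_integral_eq_toReal_lintegral {α β γ : Type*} [MeasureSpace α]
    [MeasureSpace β] [MeasureSpace γ] [SFinite (volume : Measure β)]
    [SFinite (volume : Measure γ)] {f : α → β → γ → ℝ}
    (hf : Measurable fun p : α × β × γ => f p.1 p.2.1 p.2.2) (hf0 : ∀ a b c, 0 ≤ f a b c)
    (hfin : ∫⁻ a, ∫⁻ b, ∫⁻ c, ENNReal.ofReal (f a b c) ≠ ⊤) :
    ∫ a, ∫ b, ∫ c, f a b c =
      (∫⁻ a, ∫⁻ b, ∫⁻ c, ENNReal.ofReal (f a b c)).toReal := by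
  have hm2 : Measurable fun p : α × β => ∫⁻ c, ENNReal.ofReal (f p.1 p.2 c) :=
    Measurable.lintegral_prod_right'
      (f := fun q : (α × β) × γ => ENNReal.ofReal (f q.1.1 q.1.2 q.2))
      (hf.comp (by fun_prop : Measurable fun q : (α × β) × γ => (q.1.1, q.1.2, q.2))).ennreal_ofReal
  have hm1 : Measurable fun a => ∫⁻ b, ∫⁻ c, ENNReal.ofReal (f a b c) :=
    hm2.lintegral_prod_right'
  have hinner : ∀ a b, ∫ c, f a b c = (∫⁻ c, ENNReal.ofReal (f a b c)).toReal := fun a b =>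
    integral_eq_lintegral_of_nonneg_ae (ae_of_all _ (hf0 a b))
      (hf.comp (measurable_prodMk_left.comp measurable_prodMk_left)).aestronglyMeasurable
  have hmiddle : ∀ a, ∫⁻ b, ∫⁻ c, ENNReal.ofReal (f a b c) ≠ ⊤ →
      ∫ b, ∫ c, f a b c = (∫⁻ b, ∫⁻ c, ENNReal.ofReal (f a b c)).toReal := by
    intro a ha
    simp_rw [hinner a]
    exact integral_toReal (hm2.comp measurable_prodMk_left).aemeasurable
      (ae_lt_top (hm2.comp measurable_prodMk_left) ha)
  rw [← integral_toReal hm1.aemeasurable (ae_lt_top hm1 hfin)]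
  refine integral_congr_ae ?_
  filter_upwards [ae_lt_top hm1 hfin] with a ha using hmiddle a ha.ne

section Radial

variable {E F : Type*}
  [NormedAddCommGroup E] [InnerProductSpace ℝ E] [FiniteDimensional ℝ E]
  [MeasurableSpace E] [BorelSpace E]
  [NormedAddCommGroup F] [InnerProductSpace ℝ F] [FiniteDimensional ℝ F]
  [MeasurableSpace F] [BorelSpace F]

theorem lintegral_comp_norm_eq_lintegral_lintegral (hdim : finrank ℝ F = finrank ℝ E + 1)
    {G : ℝ → ℝ≥0∞} (hG : Measurable G) :
    ∫⁻ w : F, G ‖w‖ = ∫⁻ z : ℝ, ∫⁻ x : E, G √(‖x‖ ^ 2 + z ^ 2) := by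
  have hdim' : finrank ℝ F = finrank ℝ (WithLp 2 (ℝ × E)) := by
    rw [(WithLp.linearEquiv 2 ℝ (ℝ × E)).finrank_eq, finrank_prod, finrank_self, hdim,
      add_comm]
  let φ : F ≃ₗᵢ[ℝ] WithLp 2 (ℝ × E) :=
    (stdOrthonormalBasis ℝ F).equiv (stdOrthonormalBasis ℝ _) (finCongr hdim')
  have hGn : Measurable fun p : WithLp 2 (ℝ × E) => G ‖p‖ := hG.comp measurable_norm
  calc ∫⁻ w : F, G ‖w‖ = ∫⁻ w : F, G ‖φ w‖ := by
        simp only [LinearIsometryEquiv.norm_map]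
    _ = ∫⁻ p : WithLp 2 (ℝ × E), G ‖p‖ := φ.measurePreserving.lintegral_comp hGn
    _ = ∫⁻ q : ℝ × E, G ‖WithLp.toLp 2 q‖ :=
      ((WithLp.volume_preserving_toLp ℝ E).lintegral_comp hGn).symm
    _ = ∫⁻ z : ℝ, ∫⁻ x : E, G √(‖x‖ ^ 2 + z ^ 2) := by
      rw [Measure.volume_eq_prod, lintegral_prod _ (by fun_prop)]
      refine lintegral_congr fun z => lintegral_congr fun x => ?_
      rw [WithLp.prod_norm_eq_of_L2, Real.norm_eq_abs, sq_abs, add_comm]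
      rfl

theorem lintegral_lintegral_mul_comp_sub {Φ g : E → ℝ≥0∞} (hΦ : Measurable Φ)
    (hg : Measurable g) :
    ∫⁻ x, ∫⁻ y, Φ y * g (x - y) = (∫⁻ y, Φ y) * ∫⁻ u, g u := by
  rw [lintegral_lintegral_swap (by fun_prop), ← lintegral_mul_const _ hΦ]
  refine lintegral_congr fun y => ?_
  rw [lintegral_const_mul _ (by fun_prop), lintegral_sub_right_eq_self g]

theorem lintegral_lintegral_lintegral_mul_comp_dist (hdim : finrank ℝ F = finrank ℝ E + 1)
    {Φ : E → ℝ≥0∞} (hΦ : Measurable Φ) {G : ℝ → ℝ≥0∞} (hG : Measurable G) :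
    ∫⁻ z : ℝ, ∫⁻ x : E, ∫⁻ y : E, Φ y * G √(dist x y ^ 2 + z ^ 2)
      = (∫⁻ y, Φ y) * ∫⁻ w : F, G ‖w‖ := by
  rw [lintegral_comp_norm_eq_lintegral_lintegral hdim hG, ← lintegral_const_mul _ (by fun_prop)]
  refine lintegral_congr fun z => ?_
  simp_rw [dist_eq_norm]
  exact lintegral_lintegral_mul_comp_sub (g := fun u => G √(‖u‖ ^ 2 + z ^ 2)) hΦ
    (by fun_prop)

theorem lintegral_lintegral_lintegral_ofReal_rescaled_mul_comp_dist
    (hdim : finrank ℝ F = finrank ℝ E + 1)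
    {ψ : E → ℝ} (hψm : Measurable ψ) (hψ0 : ∀ u, 0 ≤ ψ u) (hψ : Integrable ψ)
    {U : ℝ → ℝ} (hUm : Measurable U) (hU0 : ∀ t, 0 ≤ U t)
    (hU : Integrable fun w : F => U ‖w‖) {r : ℝ} (hr : 0 < r) :
    ∫⁻ z : ℝ, ∫⁻ x : E, ∫⁻ y : E,
        ENNReal.ofReal (ψ (r⁻¹ • y) * U √(dist x y ^ 2 + z ^ 2))
      = ENNReal.ofReal (r ^ finrank ℝ E * (∫ u, ψ u) * ∫ w : F, U ‖w‖) := by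
  have hψr : Integrable fun y : E => ψ (r⁻¹ • y) := hψ.comp_smul (inv_ne_zero hr.ne')
  simp_rw [ENNReal.ofReal_mul (hψ0 _)]
  rw [lintegral_lintegral_lintegral_mul_comp_dist hdim
      (Φ := fun y => ENNReal.ofReal (ψ (r⁻¹ • y))) (G := fun t => ENNReal.ofReal (U t))
      (by fun_prop) (by fun_prop),
    ← ofReal_integral_eq_lintegral_ofReal hψr (ae_of_all _ fun _ => hψ0 _),
    ← ofReal_integral_eq_lintegral_ofReal hU (ae_of_all _ fun _ => hU0 _),
    Measure.integral_comp_inv_smul_of_nonneg _ _ hr.le, smul_eq_mul,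
    ← ENNReal.ofReal_mul (mul_nonneg (by positivity) (integral_nonneg hψ0))]

theorem rescaled_mul_comp_dist_le_integral (hdim : finrank ℝ F = finrank ℝ E + 1)
    {ψ φ : E → ℝ} (hψm : Measurable ψ) (hψ0 : ∀ u, 0 ≤ ψ u) (hψ : Integrable ψ)
    (hφm : Measurable φ) (hφ0 : ∀ u, 0 ≤ φ u) (hφ : Integrable φ)
    {U : ℝ → ℝ} (hUm : Measurable U) (hU0 : ∀ t, 0 ≤ U t)
    (hU : Integrable fun w : F => U ‖w‖) {r : ℝ} (hr : 0 < r) {f : ℝ → E → E → ℝ}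
    (hf : Measurable fun p : ℝ × E × E => f p.1 p.2.1 p.2.2)
    (hlow : ∀ z x y, ψ (r⁻¹ • y) * U √(dist x y ^ 2 + z ^ 2) ≤ f z x y)
    (hup : ∀ z x y, f z x y ≤ φ (r⁻¹ • y) * U √(dist x y ^ 2 + z ^ 2)) :
    r ^ finrank ℝ E * (∫ u, ψ u) * (∫ w : F, U ‖w‖) ≤
      ∫ z, ∫ x, ∫ y, f z x y := by
  have hlowI := lintegral_lintegral_lintegral_ofReal_rescaled_mul_comp_dist hdim hψm hψ0 hψ hUm
    hU0 hU hr ▸ lintegral_mono fun z => lintegral_mono fun x => lintegral_mono fun y =>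
      ENNReal.ofReal_le_ofReal (hlow z x y)
  have hupI := lintegral_lintegral_lintegral_ofReal_rescaled_mul_comp_dist hdim hφm hφ0 hφ hUm
    hU0 hU hr ▸ lintegral_mono fun z => lintegral_mono fun x => lintegral_mono fun y =>
      ENNReal.ofReal_le_ofReal (hup z x y)
  have hfin := ne_top_of_le_ne_top ENNReal.ofReal_ne_top hupI
  rw [integral_integral_integral_eq_toReal_lintegral hf
    (fun z x y => (hlow z x y).trans' (mul_nonneg (hψ0 _) (hU0 _))) hfin]
  exact (ENNReal.ofReal_le_iff_le_toReal hfin).1 hlowI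

end Radial

theorem max_pow_four_sub_le_sq_mul_sq_ite {σ τ c δ : ℝ} (hc : 0 ≤ c) (hδ : 0 ≤ δ)
    (h : τ ^ 2 - c ≤ σ ^ 2) :
    max (τ ^ 4 - (δ + c) * τ ^ 2) 0 ≤ σ ^ 2 * τ ^ 2 * (if δ ≤ τ ^ 2 then 1 else 0) := by
  have hτ := sq_nonneg τ
  split_ifs with hδτ
  · refine max_le ?_ (by positivity)
    nlinarith [mul_le_mul_of_nonneg_right h hτ, mul_nonneg hδ hτ]
  · refine max_le ?_ (by simp)
    nlinarith [mul_nonneg hc hτ, mul_le_mul_of_nonneg_left (not_le.1 hδτ).le hτ]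

theorem sq_mul_sq_ite_le_pow_four_add {σ τ c δ : ℝ} (h : σ ^ 2 ≤ τ ^ 2 + c) :
    σ ^ 2 * τ ^ 2 * (if δ ≤ τ ^ 2 then 1 else 0) ≤ τ ^ 4 + c * τ ^ 2 := by
  split_ifs
  · nlinarith [sq_nonneg τ]
  · nlinarith [sq_nonneg τ, sq_nonneg σ]

theorem le_of_comp_sqrt_add_sq_ne_zero {U : ℝ → ℝ} {R d z : ℝ}
    (hU : ∀ t, R < t → U t = 0) (hd : 0 ≤ d) (h : U √(d ^ 2 + z ^ 2) ≠ 0) : d ≤ R :=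
  calc d = √(d ^ 2) := (Real.sqrt_sq hd).symm
    _ ≤ √(d ^ 2 + z ^ 2) := Real.sqrt_le_sqrt (by nlinarith [sq_nonneg z])
    _ ≤ R := not_lt.1 fun hlt => h (hU _ hlt)

section Integrand

variable {E : Type*} [NormedAddCommGroup E] [NormedSpace ℝ E] {b : E → ℝ} {L R r δ : ℝ}
  {U : ℝ → ℝ}

theorem abs_sq_sub_sq_le_of_comp_ne_zero (hL : 0 ≤ L)
    (hlip : ∀ x y, |b x ^ 2 - b y ^ 2| ≤ L * dist x y) (hr : 0 < r)
    (hUsupp : ∀ t, R < t → U t = 0) {z : ℝ} {x y : E}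
    (h : U √(dist x y ^ 2 + z ^ 2) ≠ 0) :
    |b (r⁻¹ • x) ^ 2 - b (r⁻¹ • y) ^ 2| ≤ R * L / r :=
  calc |b (r⁻¹ • x) ^ 2 - b (r⁻¹ • y) ^ 2|
      ≤ L * dist (r⁻¹ • x) (r⁻¹ • y) := hlip _ _
    _ = L * (r⁻¹ * dist x y) := by rw [dist_smul₀, Real.norm_of_nonneg (by positivity)]
    _ ≤ L * (r⁻¹ * R) := by
      gcongr
      exact le_of_comp_sqrt_add_sq_ne_zero hUsupp dist_nonneg h
    _ = R * L / r := by ring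

theorem rescaled_integrand_bounds (hL : 0 ≤ L)
    (hlip : ∀ x y, |b x ^ 2 - b y ^ 2| ≤ L * dist x y) (hr : 0 < r) (hδ : 0 ≤ δ)
    (hU0 : ∀ t, 0 ≤ U t) (hUsupp : ∀ t, R < t → U t = 0) (z : ℝ) (x y : E) :
    r⁻¹ ^ 4 * max (b (r⁻¹ • y) ^ 4 - (δ + R * L / r) * b (r⁻¹ • y) ^ 2) 0 *
          U √(dist x y ^ 2 + z ^ 2) ≤
        (r⁻¹ * b (r⁻¹ • x)) ^ 2 * (r⁻¹ * b (r⁻¹ • y)) ^ 2 * U √(dist x y ^ 2 + z ^ 2) *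
          (if δ ≤ b (r⁻¹ • y) ^ 2 then 1 else 0) ∧
      (r⁻¹ * b (r⁻¹ • x)) ^ 2 * (r⁻¹ * b (r⁻¹ • y)) ^ 2 * U √(dist x y ^ 2 + z ^ 2) *
          (if δ ≤ b (r⁻¹ • y) ^ 2 then 1 else 0) ≤
        r⁻¹ ^ 4 * (b (r⁻¹ • y) ^ 4 + R * L / r * b (r⁻¹ • y) ^ 2) *
          U √(dist x y ^ 2 + z ^ 2) := by
  set K := U √(dist x y ^ 2 + z ^ 2)
  by_cases hK : K = 0
  · simp [hK]
  have hR : 0 ≤ R := dist_nonneg.trans (le_of_comp_sqrt_add_sq_ne_zero hUsupp dist_nonneg hK)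
  have hclose := abs_le.1 (abs_sq_sub_sq_le_of_comp_ne_zero hL hlip hr hUsupp hK)
  have hK0 : 0 ≤ r⁻¹ ^ 4 * K := mul_nonneg (by positivity) (hU0 _)
  have hlow := max_pow_four_sub_le_sq_mul_sq_ite (by positivity : 0 ≤ R * L / r) hδ
    (by linarith [hclose.2] : b (r⁻¹ • y) ^ 2 - R * L / r ≤ b (r⁻¹ • x) ^ 2)
  have hup := sq_mul_sq_ite_le_pow_four_add (δ := δ)
    (by linarith [hclose.1] : b (r⁻¹ • x) ^ 2 ≤ b (r⁻¹ • y) ^ 2 + R * L / r)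
  constructor
  · exact (le_of_eq (by ring)).trans ((mul_le_mul_of_nonneg_left hlow hK0).trans_eq (by ring))
  · exact (le_of_eq (by ring)).trans ((mul_le_mul_of_nonneg_left hup hK0).trans_eq (by ring))

end Integrand

theorem effective_interaction_lower_bound_general (b : EuclideanSpace ℝ (Fin 2) → ℝ)
    (hbmeas : Measurable b)
    (L : ℝ) (hL : 0 ≤ L)
    (hlip : ∀ x y : EuclideanSpace ℝ (Fin 2), |b x ^ 2 - b y ^ 2| ≤ L * dist x y)
    (hb2 : ∫ x, b x ^ 2 = 1) (hb4 : Integrable (fun x => b x ^ 4))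
    (R r δ : ℝ) (hR : 0 < R) (hr : 0 < r) (hδ : 0 < δ)
    (U : ℝ → ℝ) (hUmeas : Measurable U) (hU0 : ∀ t, 0 ≤ U t)
    (hUsupp : ∀ t, R < t → U t = 0)
    (hUint : ∫ x : EuclideanSpace ℝ (Fin 3), U ‖x‖ = 4 * π) :
    4 * π / r ^ 2 * ((∫ x, b x ^ 4) - δ - R * L / r) ≤
      ∫ z : ℝ, ∫ x : EuclideanSpace ℝ (Fin 2), ∫ y : EuclideanSpace ℝ (Fin 2),
        (r⁻¹ * b (r⁻¹ • x)) ^ 2 * (r⁻¹ * b (r⁻¹ • y)) ^ 2 *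
          U (Real.sqrt (dist x y ^ 2 + z ^ 2)) *
          (if δ ≤ b (r⁻¹ • y) ^ 2 then 1 else 0) := by
  have hU : Integrable fun w : EuclideanSpace ℝ (Fin 3) => U ‖w‖ :=
    .of_integral_ne_zero (by rw [hUint]; positivity)
  have hb2i : Integrable fun x => b x ^ 2 := .of_integral_ne_zero (by rw [hb2]; norm_num)
  set c := R * L / r
  have hdiff := hb4.sub (hb2i.const_mul (δ + c))
  have hlower : (∫ x, b x ^ 4) - δ - c ≤ ∫ u, max (b u ^ 4 - (δ + c) * b u ^ 2) 0 :=
    calc (∫ x, b x ^ 4) - δ - c = ∫ u, (b u ^ 4 - (δ + c) * b u ^ 2) := by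
          rw [integral_sub hb4 (hb2i.const_mul _), integral_const_mul, hb2]; ring
      _ ≤ _ := integral_mono hdiff hdiff.pos_part fun u => le_max_left _ _
  have hbounds := rescaled_integrand_bounds (δ := δ) hL hlip hr hδ.le hU0 hUsupp
  calc 4 * π / r ^ 2 * ((∫ x, b x ^ 4) - δ - c)
      ≤ r ^ finrank ℝ (EuclideanSpace ℝ (Fin 2)) *
          (∫ u, r⁻¹ ^ 4 * max (b u ^ 4 - (δ + c) * b u ^ 2) 0) *
          ∫ w : EuclideanSpace ℝ (Fin 3), U ‖w‖ := by
        rw [finrank_euclideanSpace_fin, integral_const_mul, hUint]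
        calc _ = r ^ 2 * (r⁻¹ ^ 4 * ((∫ x, b x ^ 4) - δ - c)) * (4 * π) := by field_simp
          _ ≤ _ := by gcongr
    _ ≤ _ := rescaled_mul_comp_dist_le_integral (by simp)
        (by fun_prop) (fun u => by positivity) (hdiff.pos_part.const_mul _)
        (φ := fun u => r⁻¹ ^ 4 * (b u ^ 4 + c * b u ^ 2))
        (by fun_prop) (fun u => by positivity) ((hb4.add (hb2i.const_mul c)).const_mul _)
        hUmeas hU0 hU hr
        ((by fun_prop : Measurable _).mul (measurable_const.ite
          (measurableSet_le measurable_const (by fun_prop)) measurable_const))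
        (fun z x y => (hbounds z x y).1) (fun z x y => (hbounds z x y).2)

/-- Lower bound on the effective one-dimensional interaction: with `b ≥ 0`,
`‖b‖₂ = 1`, `b²` Lipschitz with constant `L = ‖∇b²‖_∞`, `b_r(x) = r⁻¹ b(x/r)`,
`𝓑_δ = {b² ≥ δ}`, and `U ≥ 0` radial with support in `[0,R]` and
`∫_{ℝ³} U(|x|) d³x = 4π`:
`∫ dz ∫∫ b_r(x)² b_r(y)² U(√(|x-y|²+z²)) 𝟙_{𝓑_δ}(y/r) dx dy
  ≥ (4π/r²)(‖b‖₄⁴ - δ - R‖∇b²‖_∞/r)`. -/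
theorem effective_interaction_lower_bound (b : EuclideanSpace ℝ (Fin 2) → ℝ)
    (hbmeas : Measurable b) (hb0 : ∀ x, 0 ≤ b x)
    (L : ℝ) (hL : 0 ≤ L)
    (hlip : ∀ x y : EuclideanSpace ℝ (Fin 2), |b x ^ 2 - b y ^ 2| ≤ L * dist x y)
    (hb2 : ∫ x, b x ^ 2 = 1) (hb4 : Integrable (fun x => b x ^ 4))
    (R r δ : ℝ) (hR : 0 < R) (hr : 0 < r) (hδ : 0 < δ)
    (U : ℝ → ℝ) (hUmeas : Measurable U) (hU0 : ∀ t, 0 ≤ U t)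
    (hUsupp : ∀ t, R < t → U t = 0)
    (hUint : ∫ x : EuclideanSpace ℝ (Fin 3), U ‖x‖ = 4 * π) :
    4 * π / r ^ 2 * ((∫ x, b x ^ 4) - δ - R * L / r) ≤
      ∫ z : ℝ, ∫ x : EuclideanSpace ℝ (Fin 2), ∫ y : EuclideanSpace ℝ (Fin 2),
        (r⁻¹ * b (r⁻¹ • x)) ^ 2 * (r⁻¹ * b (r⁻¹ • y)) ^ 2 *
          U (Real.sqrt (dist x y ^ 2 + z ^ 2)) *
          (if δ ≤ b (r⁻¹ • y) ^ 2 then 1 else 0) :=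
  effective_interaction_lower_bound_general b hbmeas L hL hlip hb2 hb4 R r δ hR hr hδ U hUmeas hU0
    hUsupp hUint
end
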